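/- arXiv:0704.2511 — 6 statements merged into one kernel-verified Lean document; each statement's English description precedes it below -/
import Mathlib

section
/- Fix λ ≥ 1, let R = 2^λ and M = R/2. For every s ∈ ℂ^R and every 0 ≤ k < M, the relay matrix A_{M+k} = [[0,−P_k],[P_k,0]] satisfies the conjugate intertwining relation A_{M+k} · conj(S(s)) = S(s) · A_{M+k}, where conj(S(s)) is the entrywise complex conjugate of S(s). -/
open Matrix

namespace DDSTC

/-- Index type `{0, ..., M-1}` with `M = 2^(λ-1)` (so `R = 2^λ = 2*M`,
and `R×R` matrices are indexed by `Idx lam ⊕ Idx lam`). -/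
abbrev Idx (lam : ℕ) := Fin (2 ^ (lam - 1))

/-- Bitwise XOR `⊕` on `{0, ..., 2^(λ-1) - 1}`. -/
def fx {lam : ℕ} (i j : Idx lam) : Idx lam :=
  ⟨i.val ^^^ j.val, Nat.xor_lt_two_pow i.isLt j.isLt⟩

/-- The matrix `P_k ∈ M_M(ℂ)`, with `(P_k)_{ij} = 1` if `j = i ⊕ k` and `0` otherwise. -/
def P {lam : ℕ} (k : Idx lam) : Matrix (Idx lam) (Idx lam) ℂ :=
  Matrix.of fun i j => if j = fx i k then 1 else 0

/-- The `R×R` design matrix `S(s) = [[C(s), -conj(D(s))], [D(s), conj(C(s))]]`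
where `C(s)_{ij} = s_{i⊕j}` and `D(s)_{ij} = s_{M+(i⊕j)}`. -/
def Sdes {lam : ℕ} (s : Idx lam ⊕ Idx lam → ℂ) :
    Matrix (Idx lam ⊕ Idx lam) (Idx lam ⊕ Idx lam) ℂ :=
  Matrix.fromBlocks
    (Matrix.of fun i j => s (Sum.inl (fx i j)))
    (-(Matrix.of fun i j => starRingEnd ℂ (s (Sum.inr (fx i j)))))
    (Matrix.of fun i j => s (Sum.inr (fx i j)))
    (Matrix.of fun i j => starRingEnd ℂ (s (Sum.inl (fx i j))))

/-- The relay matrices: `A_k = [[P_k, 0], [0, P_k]]` for `0 ≤ k < M` (index `Sum.inl k`)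
and `A_{M+k} = [[0, -P_k], [P_k, 0]]` for `0 ≤ k < M` (index `Sum.inr k`). -/
def Arel {lam : ℕ} : Idx lam ⊕ Idx lam → Matrix (Idx lam ⊕ Idx lam) (Idx lam ⊕ Idx lam) ℂ
  | Sum.inl k => Matrix.fromBlocks (P k) 0 0 (P k)
  | Sum.inr k => Matrix.fromBlocks 0 (-(P k)) (P k) 0

lemma fx_assoc {lam : ℕ} (a b c : Idx lam) : fx (fx a b) c = fx a (fx b c) := by
  simp [fx, Nat.xor_assoc]

lemma fx_comm {lam : ℕ} (a b : Idx lam) : fx a b = fx b a := by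
  simp [fx, Nat.xor_comm]

lemma mul_P_apply {lam : ℕ} (B : Matrix (Idx lam) (Idx lam) ℂ) (k : Idx lam)
    (i j : Idx lam) : (B * P k) i j = B i (fx j k) := by
  have h : ∀ m : Idx lam, j = fx m k ↔ m = fx j k := by
    intro m
    constructor <;> rintro rfl <;>
      simp [fx, Fin.ext_iff, Nat.xor_assoc]
  simp only [mul_apply, P, Matrix.of_apply, h]
  simp

lemma P_mul_apply {lam : ℕ} (B : Matrix (Idx lam) (Idx lam) ℂ) (k : Idx lam)
    (i j : Idx lam) : (P k * B) i j = B (fx i k) j := by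
  simp [mul_apply, P]

/-- for every `s ∈ ℂ^R` and every `0 ≤ k < M`, the relay matrix
`A_{M+k} = [[0, -P_k], [P_k, 0]]` satisfies `A_{M+k} · conj(S(s)) = S(s) · A_{M+k}`. -/
theorem stmt3 (lam : ℕ) (hlam : 1 ≤ lam) (s : Idx lam ⊕ Idx lam → ℂ) (k : Idx lam) :
    Arel (Sum.inr k) * (Sdes s).map (starRingEnd ℂ) = Sdes s * Arel (Sum.inr k) := by
  have key : ∀ (a b c : Idx lam), fx (fx a c) b = fx a (fx b c) := by
    intro a b c; rw [fx_assoc, fx_comm c b]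
  ext i j
  cases i <;> cases j <;>
    simp only [Arel, Sdes, Matrix.fromBlocks_map, Matrix.fromBlocks_multiply,
      Matrix.zero_mul, Matrix.mul_zero, zero_add, add_zero, Matrix.neg_mul,
      Matrix.mul_neg, neg_neg, Matrix.fromBlocks_apply₁₁, Matrix.fromBlocks_apply₁₂,
      Matrix.fromBlocks_apply₂₁, Matrix.fromBlocks_apply₂₂, Matrix.neg_apply,
      mul_P_apply, P_mul_apply, Matrix.map_apply,  Matrix.of_apply,
      RingHom.map_neg, RingHomCompTriple.comp_apply, Complex.conj_conj, RingHom.id_apply, key]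
end DDSTC
end

section
/- Fix λ ≥ 1, let R = 2^λ and M = R/2. For every s ∈ ℂ^R, viewed as a column vector, the k-th column of the design matrix S(s) equals A_k s for 0 ≤ k < M and equals A_k conj(s) for M ≤ k < R; equivalently, S(s) = [A_0 s, ..., A_{M−1} s, A_M conj(s), ..., A_{R−1} conj(s)]. In other words, the matrix formed at the destination by the relay protocol from the transmitted vector s coincides exactly with the design used at the source. -/
open Matrix

namespace DDSTC

lemma P_mulVec {lam : ℕ} (k : Idx lam) (v : Idx lam → ℂ) (i : Idx lam) :
    (P k).mulVec v i = v (fx i k) := by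
  simp [Matrix.mulVec, dotProduct, P, ite_mul]

/-- for every `s ∈ ℂ^R`, the `k`-th column of `S(s)` equals `A_k s` for
`0 ≤ k < M` (index `Sum.inl k`) and equals `A_{M+k} conj(s)` for the last `M` columns
(index `Sum.inr k`); i.e. `S(s) = [A_0 s, ..., A_{M-1} s, A_M conj(s), ..., A_{R-1} conj(s)]`. -/
theorem stmt4 (lam : ℕ) (hlam : 1 ≤ lam) (s : Idx lam ⊕ Idx lam → ℂ) :
    (∀ (k : Idx lam) (i : Idx lam ⊕ Idx lam),
      Sdes s i (Sum.inl k) = (Arel (Sum.inl k)).mulVec s i) ∧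
    (∀ (k : Idx lam) (i : Idx lam ⊕ Idx lam),
      Sdes s i (Sum.inr k) = (Arel (Sum.inr k)).mulVec (fun t => starRingEnd ℂ (s t)) i) := by
  constructor <;> intro k i <;>
    rcases i with i | i <;>
    simp [Sdes, Arel, Matrix.fromBlocks_mulVec, P_mulVec, Matrix.neg_mulVec, RingHom.id_apply]
end DDSTC
end

section
/- Fix λ ≥ 1, let R = 2^λ and M = R/2. For every s ∈ ℂ^R, the Gram matrix S(s)ᴴ S(s) has vanishing off-diagonal blocks: for all 0 ≤ j, k < M, the standard Hermitian inner product of the j-th column of S(s) with the (M+k)-th column of S(s) is zero. That is, each of the first M columns of the design is orthogonal to each of its last M columns, for every choice of the complex symbols. -/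
open Matrix

namespace DDSTC

lemma xor1 (a b c : ℕ) : (a ^^^ (b ^^^ c)) ^^^ b = a ^^^ c := by
  rw [Nat.xor_assoc, Nat.xor_comm (b ^^^ c) b, ← Nat.xor_assoc b b c, Nat.xor_self, Nat.zero_xor]

lemma xor2 (a b c : ℕ) : (a ^^^ (b ^^^ c)) ^^^ c = a ^^^ b := by
  rw [Nat.xor_assoc, Nat.xor_assoc, Nat.xor_self, Nat.xor_zero]

lemma xor3 (a b : ℕ) : (a ^^^ b) ^^^ b = a := by
  rw [Nat.xor_assoc, Nat.xor_self, Nat.xor_zero]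

/-- for every `s ∈ ℂ^R` the Gram matrix `S(s)ᴴ S(s)` has vanishing
off-diagonal blocks: for all `0 ≤ j, k < M`, the Hermitian inner product of the `j`-th
column of `S(s)` with the `(M+k)`-th column of `S(s)` is zero. -/
theorem stmt7 (lam : ℕ) (hlam : 1 ≤ lam) (s : Idx lam ⊕ Idx lam → ℂ) (j k : Idx lam) :
    ∑ i : Idx lam ⊕ Idx lam,
      starRingEnd ℂ (Sdes s i (Sum.inl j)) * Sdes s i (Sum.inr k) = 0 := by
  rw [Fintype.sum_sum_type]
  have hxor : ∀ i : Idx lam, fx (fx i (fx j k)) j = fx i k := fun i =>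
    Fin.ext (xor1 i.val j.val k.val)
  have hxor' : ∀ i : Idx lam, fx (fx i (fx j k)) k = fx i j := fun i =>
    Fin.ext (xor2 i.val j.val k.val)
  have h2 : ∑ i : Idx lam, starRingEnd ℂ (Sdes s (Sum.inr i) (Sum.inl j)) *
      Sdes s (Sum.inr i) (Sum.inr k)
      = ∑ i : Idx lam, starRingEnd ℂ (Sdes s (Sum.inr (fx i (fx j k))) (Sum.inl j)) *
      Sdes s (Sum.inr (fx i (fx j k))) (Sum.inr k) :=
    (Fintype.sum_equiv
      ⟨fun i => fx i (fx j k), fun i => fx i (fx j k),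
       fun i => Fin.ext (xor3 i.val _), fun i => Fin.ext (xor3 i.val _)⟩
      _ _ (fun i => rfl)).symm
  rw [h2]
  simp only [Sdes, Matrix.fromBlocks_apply₁₁, Matrix.fromBlocks_apply₁₂,
    Matrix.fromBlocks_apply₂₁, Matrix.fromBlocks_apply₂₂, Matrix.of_apply,
    Matrix.neg_apply, hxor, hxor']
  rw [← Finset.sum_add_distrib]
  apply Finset.sum_eq_zero
  intro i _
  ring
end DDSTC
end

section
/- Fix λ ≥ 1, let R = 2^λ and M = R/2. The set of all design matrices {S(s) : s ∈ ℂ^R} is closed under matrix multiplication: for every s, s' ∈ ℂ^R there exists s'' ∈ ℂ^R such that S(s) · S(s') = S(s''). (Together with ℝ-linearity in s and S(e_0) = I_R, the design matrices form a real subalgebra of M_R(ℂ); this is what makes differential encoding s_t = (1/a_{t−1}) U_t s_{t−1} with codewords U_t = S(x) consistent.) -/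
open Matrix

namespace DDSTC

lemma fx_fx_self {lam : ℕ} (i t : Idx lam) : fx i (fx i t) = t := by
  apply Fin.ext
  show i.val ^^^ (i.val ^^^ t.val) = t.val
  rw [← Nat.xor_assoc, Nat.xor_self, Nat.zero_xor]

lemma fx_swap {lam : ℕ} (i t j : Idx lam) : fx (fx i t) j = fx t (fx i j) := by
  apply Fin.ext
  show (i.val ^^^ t.val) ^^^ j.val = t.val ^^^ (i.val ^^^ j.val)
  rw [← Nat.xor_assoc, Nat.xor_comm i.val t.val, Nat.xor_assoc]

lemma fx_bij {lam : ℕ} (i : Idx lam) : Function.Bijective (fx i) :=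
  Function.Involutive.bijective (fx_fx_self i)

/-- the set of design matrices `{S(s) : s ∈ ℂ^R}` is closed under matrix
multiplication: for all `s, s' ∈ ℂ^R` there is `s'' ∈ ℂ^R` with `S(s) S(s') = S(s'')`. -/
theorem stmt9 (lam : ℕ) (hlam : 1 ≤ lam) (s s' : Idx lam ⊕ Idx lam → ℂ) :
    ∃ s'' : Idx lam ⊕ Idx lam → ℂ, Sdes s * Sdes s' = Sdes s'' := by
  refine ⟨fun k => match k with
    | Sum.inl k => ∑ t, (s (Sum.inl t) * s' (Sum.inl (fx t k))
        - starRingEnd ℂ (s (Sum.inr t)) * s' (Sum.inr (fx t k)))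
    | Sum.inr k => ∑ t, (starRingEnd ℂ (s (Sum.inl t)) * s' (Sum.inr (fx t k))
        + s (Sum.inr t) * s' (Sum.inl (fx t k))), ?_⟩
  ext (i | i) (j | j) <;>
    simp only [Sdes, Matrix.mul_apply, Matrix.fromBlocks_apply₁₁,
      Matrix.fromBlocks_apply₁₂, Matrix.fromBlocks_apply₂₁, Matrix.fromBlocks_apply₂₂,
      Matrix.of_apply, Fintype.sum_sum_type, Matrix.neg_apply, map_sum, map_sub, map_add,
      _root_.map_mul, RingHomCompTriple.comp_apply, RingHom.id_apply, Complex.conj_conj, neg_neg, mul_neg, neg_mul,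
      Finset.sum_neg_distrib, neg_sub, neg_add, Finset.sum_sub_distrib, Finset.sum_add_distrib]
  · rw [Fintype.sum_bijective (fx i) (fx_bij i)
        (fun t => s (Sum.inl t) * s' (Sum.inl (fx t (fx i j))))
        (fun m => s (Sum.inl (fx i m)) * s' (Sum.inl (fx m j)))
        (fun t => by simp only [fx_fx_self, fx_swap]),
      Fintype.sum_bijective (fx i) (fx_bij i)
        (fun t => starRingEnd ℂ (s (Sum.inr t)) * s' (Sum.inr (fx t (fx i j))))
        (fun m => starRingEnd ℂ (s (Sum.inr (fx i m))) * s' (Sum.inr (fx m j)))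
        (fun t => by simp only [fx_fx_self, fx_swap])]
    all_goals ring
  · rw [Fintype.sum_bijective (fx i) (fx_bij i)
        (fun t => s (Sum.inl t) * starRingEnd ℂ (s' (Sum.inr (fx t (fx i j)))))
        (fun m => s (Sum.inl (fx i m)) * starRingEnd ℂ (s' (Sum.inr (fx m j))))
        (fun t => by simp only [fx_fx_self, fx_swap]),
      Fintype.sum_bijective (fx i) (fx_bij i)
        (fun t => starRingEnd ℂ (s (Sum.inr t)) * starRingEnd ℂ (s' (Sum.inl (fx t (fx i j)))))
        (fun m => starRingEnd ℂ (s (Sum.inr (fx i m))) * starRingEnd ℂ (s' (Sum.inl (fx m j))))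
        (fun t => by simp only [fx_fx_self, fx_swap])]
    all_goals ring
  · rw [Fintype.sum_bijective (fx i) (fx_bij i)
        (fun t => starRingEnd ℂ (s (Sum.inl t)) * s' (Sum.inr (fx t (fx i j))))
        (fun m => starRingEnd ℂ (s (Sum.inl (fx i m))) * s' (Sum.inr (fx m j)))
        (fun t => by simp only [fx_fx_self, fx_swap]),
      Fintype.sum_bijective (fx i) (fx_bij i)
        (fun t => s (Sum.inr t) * s' (Sum.inl (fx t (fx i j))))
        (fun m => s (Sum.inr (fx i m)) * s' (Sum.inl (fx m j)))
        (fun t => by simp only [fx_fx_self, fx_swap])]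
    all_goals ring
  · rw [Fintype.sum_bijective (fx i) (fx_bij i)
        (fun t => starRingEnd ℂ (s (Sum.inl t)) * starRingEnd ℂ (s' (Sum.inl (fx t (fx i j)))))
        (fun m => starRingEnd ℂ (s (Sum.inl (fx i m))) * starRingEnd ℂ (s' (Sum.inl (fx m j))))
        (fun t => by simp only [fx_fx_self, fx_swap]),
      Fintype.sum_bijective (fx i) (fx_bij i)
        (fun t => s (Sum.inr t) * starRingEnd ℂ (s' (Sum.inr (fx t (fx i j)))))
        (fun m => s (Sum.inr (fx i m)) * starRingEnd ℂ (s' (Sum.inr (fx m j))))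
        (fun t => by simp only [fx_fx_self, fx_swap])]
    all_goals ring
end DDSTC
end

section
/- Let B_1, ..., B_K ∈ M_n(ℂ) and let {1,...,K} be partitioned into g groups G_1, ..., G_g. Assume the cross condition B_iᴴ B_j + B_jᴴ B_i = 0 whenever i and j lie in different groups. For x ∈ ℝ^K set S(x) = Σ_{i=1}^K x_i B_i and S_k(x) = Σ_{i∈G_k} x_i B_i. Then for all y, z ∈ ℂ^n, ‖y − S(x) z‖² = Σ_{k=1}^g ‖y − S_k(x) z‖² − (g−1)‖y‖². In particular, the decoding metric ‖y_t − (1/a_{t−1}) S(x) y_{t−1}‖² decomposes, up to a constant independent of x, into a sum of g terms, the k-th depending only on the variables in group G_k. -/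
/-!
Grouping the terms of `S(x)` as `S(x) = ∑ₖ Sₖ(x)`, the cross condition makes the vectors
`Sₖ(x) z` pairwise orthogonal for the real part of the inner product, because
`2 Re ⟪Sₖ z, Sₗ z⟫ = ⟪z, (Sₖᴴ Sₗ + Sₗᴴ Sₖ) z⟫`. Expanding every square as
`‖y - w‖² = ‖y‖² - 2 Re ⟪y, w⟫ + ‖w‖²`, Pythagoras turns `‖S z‖²` into `∑ₖ ‖Sₖ z‖²`, the linear
terms agree on both sides, and only the `g` copies of `‖y‖²` against one remain.
-/

open Matrix
open scoped InnerProductSpace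

namespace DDSTC

section ReOrthogonal

variable {𝕜 E ι : Type*} [RCLike 𝕜] [NormedAddCommGroup E] [InnerProductSpace 𝕜 E]

theorem norm_sum_sq_of_re_inner_eq_zero {s : Finset ι} {v : ι → E}
    (h : ∀ k ∈ s, ∀ l ∈ s, k ≠ l → RCLike.re ⟪v k, v l⟫_𝕜 = 0) :
    ‖∑ k ∈ s, v k‖ ^ 2 = ∑ k ∈ s, ‖v k‖ ^ 2 := by
  rw [@norm_sq_eq_re_inner 𝕜, sum_inner, map_sum]
  refine Finset.sum_congr rfl fun k hk => ?_
  rw [inner_sum, map_sum, Finset.sum_eq_single_of_mem k hk fun l hl hlk => h k hk l hl hlk.symm,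
    ← norm_sq_eq_re_inner]

theorem norm_sub_sum_sq_of_re_inner_eq_zero (y : E) {s : Finset ι} {v : ι → E}
    (h : ∀ k ∈ s, ∀ l ∈ s, k ≠ l → RCLike.re ⟪v k, v l⟫_𝕜 = 0) :
    ‖y - ∑ k ∈ s, v k‖ ^ 2 = ∑ k ∈ s, ‖y - v k‖ ^ 2 - ((s.card : ℝ) - 1) * ‖y‖ ^ 2 := by
  simp only [@norm_sub_sq 𝕜, norm_sum_sq_of_re_inner_eq_zero h, inner_sum, map_sum,
    Finset.sum_add_distrib, Finset.sum_sub_distrib, Finset.sum_const, nsmul_eq_mul,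
    ← Finset.mul_sum]
  ring

end ReOrthogonal

section ConjTransposeAnticommute

variable {ι m n : Type*} [Fintype m]

theorem sum_smul_conjTranspose_mul_add_eq_zero {s t : Finset ι} (B : ι → Matrix m n ℂ)
    (x : ι → ℝ) (h : ∀ i ∈ s, ∀ j ∈ t, (B i)ᴴ * B j + (B j)ᴴ * B i = 0) :
    (∑ i ∈ s, (x i : ℂ) • B i)ᴴ * (∑ j ∈ t, (x j : ℂ) • B j) +
      (∑ j ∈ t, (x j : ℂ) • B j)ᴴ * (∑ i ∈ s, (x i : ℂ) • B i) = 0 := by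
  simp only [conjTranspose_sum, conjTranspose_smul, Complex.star_def, Complex.conj_ofReal,
    Matrix.sum_mul, Matrix.mul_sum, Matrix.smul_mul, Matrix.mul_smul, Finset.smul_sum, smul_smul]
  rw [Finset.sum_comm (s := t), ← Finset.sum_add_distrib]
  refine Finset.sum_eq_zero fun i hi => ?_
  rw [← Finset.sum_add_distrib]
  refine Finset.sum_eq_zero fun j hj => ?_
  rw [mul_comm (x j : ℂ), ← smul_add, h i hi j hj, smul_zero]

variable [Fintype n]

theorem re_inner_toLp_mulVec_eq_zero {A B : Matrix m n ℂ} (h : Aᴴ * B + Bᴴ * A = 0) (z : n → ℂ) :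
    RCLike.re ⟪WithLp.toLp 2 (A *ᵥ z), WithLp.toLp 2 (B *ᵥ z)⟫_ℂ = 0 := by
  have hsum : ⟪WithLp.toLp 2 (A *ᵥ z), WithLp.toLp 2 (B *ᵥ z)⟫_ℂ +
      ⟪WithLp.toLp 2 (B *ᵥ z), WithLp.toLp 2 (A *ᵥ z)⟫_ℂ = 0 := by
    simp only [EuclideanSpace.inner_toLp_toLp, star_mulVec, dotProduct_comm _ (star z ᵥ* _),
      ← dotProduct_mulVec]
    rw [mulVec_mulVec, mulVec_mulVec, ← dotProduct_add, ← add_mulVec, h, zero_mulVec,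
      dotProduct_zero]
  have hre := congrArg RCLike.re hsum
  rw [map_add, inner_re_symm (𝕜 := ℂ) (WithLp.toLp 2 (B *ᵥ z))] at hre
  simpa using hre

end ConjTransposeAnticommute

/-- if the weight matrices of different groups satisfy
`B_iᴴ B_j + B_jᴴ B_i = 0`, then for `S(x) = Σ_i x_i B_i` and the group sums
`S_k(x) = Σ_{i ∈ G_k} x_i B_i` one has, for all `y, z ∈ ℂ^n`,
`‖y - S(x) z‖² = Σ_k ‖y - S_k(x) z‖² - (g-1) ‖y‖²`. -/
theorem stmt11 (n K g : ℕ) (B : Fin K → Matrix (Fin n) (Fin n) ℂ)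
    (grp : Fin K → Fin g)
    (hcross : ∀ i j : Fin K, grp i ≠ grp j → (B i)ᴴ * B j + (B j)ᴴ * B i = 0)
    (x : Fin K → ℝ) (y z : Fin n → ℂ) :
    ∑ t, ‖y t - (∑ i, (x i : ℂ) • B i).mulVec z t‖ ^ 2 =
      (∑ k : Fin g, ∑ t, ‖y t -
          (∑ i ∈ Finset.univ.filter fun i => grp i = k, (x i : ℂ) • B i).mulVec z t‖ ^ 2)
        - ((g : ℝ) - 1) * ∑ t, ‖y t‖ ^ 2 := by
  set S : Fin g → Matrix (Fin n) (Fin n) ℂ :=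
    fun k => ∑ i ∈ Finset.univ.filter fun i => grp i = k, (x i : ℂ) • B i
  have hsum : (∑ i, (x i : ℂ) • B i) *ᵥ z = ∑ k, S k *ᵥ z := by
    rw [← Finset.sum_fiberwise Finset.univ grp, sum_mulVec]
  have horth : ∀ k ∈ Finset.univ, ∀ l ∈ Finset.univ, k ≠ l →
      RCLike.re ⟪WithLp.toLp 2 (S k *ᵥ z), WithLp.toLp 2 (S l *ᵥ z)⟫_ℂ = 0 :=
    fun k _ l _ hkl => re_inner_toLp_mulVec_eq_zero
      (sum_smul_conjTranspose_mul_add_eq_zero B x fun i hi j hj => hcross i j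
        (by rwa [(Finset.mem_filter.1 hi).2, (Finset.mem_filter.1 hj).2])) z
  have key := norm_sub_sum_sq_of_re_inner_eq_zero (WithLp.toLp 2 y) horth
  simp only [← WithLp.toLp_sum, ← WithLp.toLp_sub, EuclideanSpace.norm_sq_eq, Pi.sub_apply, Finset.card_univ, Fintype.card_fin] at key
  rw [hsum]
  exact key
end DDSTC
end

section
/- Let B_1, ..., B_K ∈ M_n(ℂ) with {1,...,K} partitioned into groups G_1, ..., G_g satisfying B_iᴴ B_j + B_jᴴ B_i = 0 whenever i, j lie in different groups, and let the signal set be a Cartesian product 𝒜 = 𝒜_1 × ⋯ × 𝒜_g, where 𝒜_k prescribes the values of the variables indexed by G_k (g-group encodable code). Write S(x) = Σ_i x_i B_i and S_k(x_k) = Σ_{i∈G_k} x_i B_i. Then for any y, z ∈ ℂ^n and nonzero real a, a point x̂ = (x̂_1,...,x̂_g) ∈ 𝒜 minimizes ‖y − (1/a) S(x) z‖² over x ∈ 𝒜 if and only if for each k, x̂_k minimizes ‖y − (1/a) S_k(x_k) z‖² over x_k ∈ 𝒜_k. Hence the code is g-group decodable: the decoder can search each group independently. -/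
/-!
For real coefficients the cross condition gives
`Re ⟪S_j z, S_k z⟫ = ½ zᴴ (S_jᴴ S_k + S_kᴴ S_j) z = 0` for `j ≠ k`, so expanding the squares yields
`‖y - a⁻¹ ∑_k S_k z‖² = ∑_k ‖y - a⁻¹ S_k z‖² - (g - 1) ‖y‖²`.
The decoding metric is therefore a sum of one term per group plus a constant, and a separable
objective is minimized over a product set exactly when each term is minimized over its factor.
-/

open Matrix

namespace DDSTC

section InnerProduct

variable {𝕜 E : Type*} [RCLike 𝕜] [NormedAddCommGroup E] [InnerProductSpace 𝕜 E]
open RCLike Finset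

theorem norm_sum_sq_of_re_inner_eq_zero_s12 {ι : Type*} (s : Finset ι) (w : ι → E)
    (hw : ∀ i ∈ s, ∀ j ∈ s, i ≠ j → re (inner 𝕜 (w i) (w j)) = 0) :
    ‖∑ i ∈ s, w i‖ ^ 2 = ∑ i ∈ s, ‖w i‖ ^ 2 := by
  rw [← inner_self_eq_norm_sq (𝕜 := 𝕜), sum_inner, map_sum]
  refine sum_congr rfl fun i hi => ?_
  rw [inner_sum, map_sum, sum_eq_single_of_mem i hi fun j hj hji => hw i hi j hj hji.symm,
    inner_self_eq_norm_sq]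

theorem norm_sub_sum_sq_of_re_inner_eq_zero_s12 {ι : Type*} (s : Finset ι) (y : E) (w : ι → E)
    (hw : ∀ i ∈ s, ∀ j ∈ s, i ≠ j → re (inner 𝕜 (w i) (w j)) = 0) :
    ‖y - ∑ i ∈ s, w i‖ ^ 2 = ∑ i ∈ s, ‖y - w i‖ ^ 2 - (#s - 1 : ℝ) * ‖y‖ ^ 2 := by
  simp only [@norm_sub_sq 𝕜, inner_sum, map_sum, norm_sum_sq_of_re_inner_eq_zero_s12 s w hw,
    sum_add_distrib, sum_sub_distrib, sum_const, nsmul_eq_mul, mul_sum]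
  ring

end InnerProduct

section Matrix

variable {𝕜 n : Type*} [RCLike 𝕜] [Fintype n]
open RCLike Finset

theorem sum_conjTranspose_mul_add_eq_zero {ι κ : Type*} (s : Finset ι) (t : Finset κ)
    (B : ι → Matrix n n 𝕜) (C : κ → Matrix n n 𝕜) (b : ι → ℝ) (c : κ → ℝ)
    (h : ∀ i ∈ s, ∀ j ∈ t, (B i)ᴴ * C j + (C j)ᴴ * B i = 0) :
    (∑ i ∈ s, (b i : 𝕜) • B i)ᴴ * ∑ j ∈ t, (c j : 𝕜) • C j
      + (∑ j ∈ t, (c j : 𝕜) • C j)ᴴ * ∑ i ∈ s, (b i : 𝕜) • B i = 0 := by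
  simp only [conjTranspose_sum, conjTranspose_smul, sum_mul, mul_sum, smul_mul_smul_comm,
    RCLike.star_def, conj_ofReal]
  rw [sum_comm (s := t), ← sum_add_distrib]
  refine sum_eq_zero fun i hi => ?_
  rw [← sum_add_distrib]
  refine sum_eq_zero fun j hj => ?_
  rw [mul_comm (c j : 𝕜), ← smul_add, h i hi j hj, smul_zero]

theorem inner_toLp_mulVec_toLp_mulVec (M N : Matrix n n 𝕜) (z : n → 𝕜) :
    inner 𝕜 (WithLp.toLp 2 (M *ᵥ z)) (WithLp.toLp 2 (N *ᵥ z)) = star z ᵥ* (Mᴴ * N) ⬝ᵥ z := by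
  rw [EuclideanSpace.inner_toLp_toLp, star_mulVec, dotProduct_comm, dotProduct_mulVec,
    vecMul_vecMul]

theorem re_inner_toLp_mulVec_eq_zero_s12 {M N : Matrix n n 𝕜} (h : Mᴴ * N + Nᴴ * M = 0)
    (z : n → 𝕜) : re (inner 𝕜 (WithLp.toLp 2 (M *ᵥ z)) (WithLp.toLp 2 (N *ᵥ z))) = 0 := by
  have hsum : inner 𝕜 (WithLp.toLp 2 (M *ᵥ z)) (WithLp.toLp 2 (N *ᵥ z))
      + inner 𝕜 (WithLp.toLp 2 (N *ᵥ z)) (WithLp.toLp 2 (M *ᵥ z)) = 0 := by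
    rw [inner_toLp_mulVec_toLp_mulVec, inner_toLp_mulVec_toLp_mulVec, ← add_dotProduct,
      ← vecMul_add, h, vecMul_zero, zero_dotProduct]
  have := congrArg re hsum
  rw [map_add, inner_re_symm (WithLp.toLp 2 (N *ᵥ z)), map_zero] at this
  linarith

theorem sum_norm_sub_sq_eq_norm_toLp_sub_sq (u v : n → 𝕜) :
    ∑ t, ‖u t - v t‖ ^ 2 = ‖WithLp.toLp 2 u - WithLp.toLp 2 v‖ ^ 2 := by
  rw [← WithLp.toLp_sub, EuclideanSpace.norm_sq_eq]
  rfl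

theorem sum_norm_sq_sub_smul_sum_mulVec {κ : Type*} [Fintype κ] (M : κ → Matrix n n 𝕜)
    (hM : ∀ j k, j ≠ k → (M j)ᴴ * M k + (M k)ᴴ * M j = 0) (c : ℝ) (y z : n → 𝕜) :
    ∑ t, ‖y t - (c • ((∑ k, M k) *ᵥ z)) t‖ ^ 2
      = ∑ k, ∑ t, ‖y t - (c • (M k *ᵥ z)) t‖ ^ 2
        - (Fintype.card κ - 1 : ℝ) * ∑ t, ‖y t‖ ^ 2 := by
  have horth : ∀ j ∈ univ, ∀ k ∈ univ, j ≠ k →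
      re (inner 𝕜 (c • WithLp.toLp 2 (M j *ᵥ z)) (c • WithLp.toLp 2 (M k *ᵥ z))) = 0 := by
    intro j _ k _ hjk
    rw [real_smul_eq_coe_smul (K := 𝕜), real_smul_eq_coe_smul (K := 𝕜), inner_smul_real_left,
      inner_smul_real_right, smul_re, smul_re, re_inner_toLp_mulVec_eq_zero_s12 (hM j k hjk),
      mul_zero, mul_zero]
  have := norm_sub_sum_sq_of_re_inner_eq_zero_s12 univ (WithLp.toLp 2 y) _ horth
  simp only [sum_norm_sub_sq_eq_norm_toLp_sub_sq, sum_mulVec, smul_sum, WithLp.toLp_sum,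
    WithLp.toLp_smul]
  rw [this, EuclideanSpace.norm_sq_eq, card_univ]

end Matrix

section Separable

open Finset

theorem separable_minimizer_iff {ι X β : Type*} [Fintype ι] {α : ι → Type*}
    [AddCommMonoid β] [PartialOrder β] [IsOrderedCancelAddMonoid β]
    (r : X → ∀ k, α k) (hr : Function.Surjective r) (f : ∀ k, α k → β)
    (A : ∀ k, Set (α k)) (xhat : X) :
    ((∀ k, r xhat k ∈ A k) ∧
        ∀ x, (∀ k, r x k ∈ A k) → ∑ k, f k (r xhat k) ≤ ∑ k, f k (r x k)) ↔
      ∀ k, r xhat k ∈ A k ∧ ∀ v ∈ A k, f k (r xhat k) ≤ f k v := by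
  classical
  constructor
  · rintro ⟨hmem, hmin⟩ k
    refine ⟨hmem k, fun v hv => ?_⟩
    obtain ⟨x, hx⟩ := hr (Function.update (r xhat) k v)
    have hxmem : ∀ j, r x j ∈ A j := by
      intro j
      rcases eq_or_ne j k with rfl | hjk
      · simpa [hx] using hv
      · simpa [hx, hjk] using hmem j
    have hrest : ∑ j ∈ univ.erase k, f j (r x j) = ∑ j ∈ univ.erase k, f j (r xhat j) :=
      sum_congr rfl fun j hj => by rw [hx, Function.update_of_ne (ne_of_mem_erase hj)]
    have hle := hmin x hxmem
    rw [← add_sum_erase _ _ (mem_univ k), ← add_sum_erase _ _ (mem_univ k), hrest, hx,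
      Function.update_self] at hle
    exact le_of_add_le_add_right hle
  · intro h
    exact ⟨fun k => (h k).1, fun x hx => sum_le_sum fun k _ => (h k).2 _ (hx k)⟩

end Separable

theorem surjective_restrict_fibers {ι κ β : Type*} (p : ι → κ) :
    Function.Surjective fun (x : ι → β) (k : κ) (i : {i // p i = k}) => x i.1 := by
  intro u
  refine ⟨fun i => u (p i) ⟨i, rfl⟩, ?_⟩
  funext k i
  obtain ⟨i, rfl⟩ := i
  rfl

theorem stmt12_general (n K g : ℕ) (B : Fin K → Matrix (Fin n) (Fin n) ℂ)
    (grp : Fin K → Fin g)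
    (hcross : ∀ i j : Fin K, grp i ≠ grp j → (B i)ᴴ * B j + (B j)ᴴ * B i = 0)
    (𝒜 : ∀ k : Fin g, Set ({i : Fin K // grp i = k} → ℝ))
    (a : ℝ) (y z : Fin n → ℂ) (xhat : Fin K → ℝ) :
    ((∀ k, (fun i : {i : Fin K // grp i = k} => xhat i.1) ∈ 𝒜 k) ∧
      ∀ x : Fin K → ℝ, (∀ k, (fun i : {i : Fin K // grp i = k} => x i.1) ∈ 𝒜 k) →
        ∑ t, ‖y t - (a⁻¹ • (∑ i, (xhat i : ℂ) • B i).mulVec z) t‖ ^ 2 ≤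
          ∑ t, ‖y t - (a⁻¹ • (∑ i, (x i : ℂ) • B i).mulVec z) t‖ ^ 2)
    ↔ (∀ k : Fin g,
        (fun i : {i : Fin K // grp i = k} => xhat i.1) ∈ 𝒜 k ∧
        ∀ v ∈ 𝒜 k,
          ∑ t, ‖y t -
              (a⁻¹ • (∑ i : {i : Fin K // grp i = k}, ((xhat i.1 : ℝ) : ℂ) • B i.1).mulVec z) t‖ ^ 2 ≤
            ∑ t, ‖y t -
              (a⁻¹ • (∑ i : {i : Fin K // grp i = k}, (v i : ℂ) • B i.1).mulVec z) t‖ ^ 2) := by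
  have hsplit : ∀ x : Fin K → ℝ,
      ∑ t, ‖y t - (a⁻¹ • (∑ i, (x i : ℂ) • B i) *ᵥ z) t‖ ^ 2
        = ∑ k, ∑ t, ‖y t - (a⁻¹ • (∑ i : {i // grp i = k}, (x i.1 : ℂ) • B i.1) *ᵥ z) t‖ ^ 2
          - (g - 1 : ℝ) * ∑ t, ‖y t‖ ^ 2 := by
    intro x
    rw [← Fintype.sum_fiberwise grp, sum_norm_sq_sub_smul_sum_mulVec, Fintype.card_fin]
    intro j k hjk
    exact sum_conjTranspose_mul_add_eq_zero _ _ _ _ _ _ fun i _ i' _ =>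
      hcross i i' (by rw [i.2, i'.2]; exact hjk)
  simp only [hsplit, sub_le_sub_iff_right]
  exact separable_minimizer_iff _ (surjective_restrict_fibers grp)
    (fun k (v : {i // grp i = k} → ℝ) =>
      ∑ t, ‖y t - (a⁻¹ • (∑ i : {i // grp i = k}, (v i : ℂ) • B i.1) *ᵥ z) t‖ ^ 2)
    𝒜 xhat

/-- for a `g`-group encodable code (signal set a Cartesian product
`𝒜 = 𝒜_1 × ⋯ × 𝒜_g`, `𝒜_k` prescribing the variables of group `G_k`) whose weight
matrices satisfy the cross condition `B_iᴴ B_j + B_jᴴ B_i = 0` for `i, j` in different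
groups, a point `x̂ ∈ 𝒜` minimizes `‖y - (1/a) S(x) z‖²` over `𝒜` iff for each `k` its
`k`-th component minimizes `‖y - (1/a) S_k(x_k) z‖²` over `𝒜_k`. -/
theorem stmt12 (n K g : ℕ) (B : Fin K → Matrix (Fin n) (Fin n) ℂ)
    (grp : Fin K → Fin g)
    (hcross : ∀ i j : Fin K, grp i ≠ grp j → (B i)ᴴ * B j + (B j)ᴴ * B i = 0)
    (𝒜 : ∀ k : Fin g, Set ({i : Fin K // grp i = k} → ℝ))
    (a : ℝ) (ha : a ≠ 0) (y z : Fin n → ℂ) (xhat : Fin K → ℝ) :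
    ((∀ k, (fun i : {i : Fin K // grp i = k} => xhat i.1) ∈ 𝒜 k) ∧
      ∀ x : Fin K → ℝ, (∀ k, (fun i : {i : Fin K // grp i = k} => x i.1) ∈ 𝒜 k) →
        ∑ t, ‖y t - (a⁻¹ • (∑ i, (xhat i : ℂ) • B i).mulVec z) t‖ ^ 2 ≤
          ∑ t, ‖y t - (a⁻¹ • (∑ i, (x i : ℂ) • B i).mulVec z) t‖ ^ 2)
    ↔ (∀ k : Fin g,
        (fun i : {i : Fin K // grp i = k} => xhat i.1) ∈ 𝒜 k ∧
        ∀ v ∈ 𝒜 k,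
          ∑ t, ‖y t -
              (a⁻¹ • (∑ i : {i : Fin K // grp i = k}, ((xhat i.1 : ℝ) : ℂ) • B i.1).mulVec z) t‖ ^ 2 ≤
            ∑ t, ‖y t -
              (a⁻¹ • (∑ i : {i : Fin K // grp i = k}, (v i : ℂ) • B i.1).mulVec z) t‖ ^ 2) :=
  stmt12_general n K g B grp hcross 𝒜 a y z xhat

end DDSTC
end
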